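/- arXiv:1803.00312 — 3 statements merged into one kernel-verified Lean document; each statement's English description precedes it below -/
import Mathlib

section
/- Let 𝒰 be a nonprincipal ultrafilter on ℕ and u : ℕ → ℝ. Define A = {n : {m : u m > u n} ∈ 𝒰}, B = {n : {m : u m = u n} ∈ 𝒰}, C = {n : {m : u m < u n} ∈ 𝒰}. Then exactly one of A, B, C belongs to 𝒰; if B ∈ 𝒰 then u has a constant subsequence; if A ∈ 𝒰 then u has a strictly increasing subsequence; if C ∈ 𝒰 then u has a strictly decreasing subsequence. -/
open Filter Set

private lemma build_seq (u : ℕ → ℝ) (S : Set ℕ) (r : ℝ → ℝ → Prop)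
    (h0 : S.Nonempty)
    (h : ∀ n ∈ S, ∀ N : ℕ, ∃ m, m ∈ S ∧ N < m ∧ r (u n) (u m)) :
    ∃ φ : ℕ → ℕ, StrictMono φ ∧ ∀ k, r (u (φ k)) (u (φ (k+1))) := by
  obtain ⟨n₀, hn₀⟩ := h0
  choose f hf1 hf2 hf3 using h
  let g : ℕ → {n // n ∈ S} := fun k =>
    Nat.rec ⟨n₀, hn₀⟩ (fun _ p => ⟨f p.1 p.2 p.1, hf1 p.1 p.2 p.1⟩) k
  refine ⟨fun k => (g k).1, strictMono_nat_of_lt_succ fun k => ?_, fun k => ?_⟩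
  · exact hf2 (g k).1 (g k).2 (g k).1
  · exact hf3 (g k).1 (g k).2 (g k).1

theorem ultrapower_trichotomy (𝒰 : Ultrafilter ℕ)
    (hfree : ∀ s : Set ℕ, s.Finite → s ∉ 𝒰) (u : ℕ → ℝ) :
    let A := {n : ℕ | {m : ℕ | u n < u m} ∈ 𝒰}
    let B := {n : ℕ | {m : ℕ | u m = u n} ∈ 𝒰}
    let C := {n : ℕ | {m : ℕ | u m < u n} ∈ 𝒰}
    ((A ∈ 𝒰 ∧ B ∉ 𝒰 ∧ C ∉ 𝒰) ∨ (B ∈ 𝒰 ∧ A ∉ 𝒰 ∧ C ∉ 𝒰) ∨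
      (C ∈ 𝒰 ∧ A ∉ 𝒰 ∧ B ∉ 𝒰)) ∧
    (B ∈ 𝒰 → ∃ φ : ℕ → ℕ, StrictMono φ ∧ ∃ c, ∀ k, u (φ k) = c) ∧
    (A ∈ 𝒰 → ∃ φ : ℕ → ℕ, StrictMono φ ∧ StrictMono (u ∘ φ)) ∧
    (C ∈ 𝒰 → ∃ φ : ℕ → ℕ, StrictMono φ ∧ StrictAnti (u ∘ φ)) := by
  intro A B C
  have hinf : ∀ s : Set ℕ, s ∈ 𝒰 → s.Infinite := by
    intro s hs
    by_contra h
    exact hfree s (Set.not_infinite.1 h) hs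
  -- pairwise disjointness (as elementwise contradictions)
  have hAB : ∀ n, n ∈ A → n ∈ B → False := by
    intro n ha hb
    have h := Filter.inter_mem ha hb
    have he : {m : ℕ | u n < u m} ∩ {m : ℕ | u m = u n} = (∅ : Set ℕ) := by
      ext m; simp only [Set.mem_inter_iff, Set.mem_setOf_eq, Set.mem_empty_iff_false, iff_false]
      rintro ⟨h1, h2⟩; rw [h2] at h1; exact lt_irrefl _ h1
    rw [he] at h
    exact 𝒰.toFilter.empty_notMem h
  have hAC : ∀ n, n ∈ A → n ∈ C → False := by
    intro n ha hc
    have h := Filter.inter_mem ha hc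
    have he : {m : ℕ | u n < u m} ∩ {m : ℕ | u m < u n} = (∅ : Set ℕ) := by
      ext m; simp only [Set.mem_inter_iff, Set.mem_setOf_eq, Set.mem_empty_iff_false, iff_false]
      rintro ⟨h1, h2⟩; exact lt_irrefl _ (h1.trans h2)
    rw [he] at h
    exact 𝒰.toFilter.empty_notMem h
  have hBC : ∀ n, n ∈ B → n ∈ C → False := by
    intro n hb hc
    have h := Filter.inter_mem hb hc
    have he : {m : ℕ | u m = u n} ∩ {m : ℕ | u m < u n} = (∅ : Set ℕ) := by
      ext m; simp only [Set.mem_inter_iff, Set.mem_setOf_eq, Set.mem_empty_iff_false, iff_false]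
      rintro ⟨h1, h2⟩; rw [h1] at h2; exact lt_irrefl _ h2
    rw [he] at h
    exact 𝒰.toFilter.empty_notMem h
  -- covering: every n is in A ∪ B ∪ C
  have hcover : ∀ n : ℕ, n ∈ A ∨ n ∈ B ∨ n ∈ C := by
    intro n
    by_cases ha : n ∈ A
    · exact Or.inl ha
    by_cases hc : n ∈ C
    · exact Or.inr (Or.inr hc)
    refine Or.inr (Or.inl ?_)
    have ha' : {m : ℕ | u n < u m}ᶜ ∈ 𝒰 := (Ultrafilter.compl_mem_iff_notMem).2 ha
    have hc' : {m : ℕ | u m < u n}ᶜ ∈ 𝒰 := (Ultrafilter.compl_mem_iff_notMem).2 hc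
    have := Filter.inter_mem ha' hc'
    refine Filter.mem_of_superset this ?_
    intro m hm
    simp only [Set.mem_inter_iff, Set.mem_compl_iff, Set.mem_setOf_eq] at hm ⊢
    exact le_antisymm (not_lt.1 hm.1) (not_lt.1 hm.2)
  have hdisj_mem : ∀ {X Y : Set ℕ}, (∀ n, n ∈ X → n ∈ Y → False) → X ∈ 𝒰 → Y ∉ 𝒰 := by
    intro X Y hd hx hy
    have h := Filter.inter_mem hx hy
    have he : X ∩ Y = (∅ : Set ℕ) := by
      ext m; simp only [Set.mem_inter_iff, Set.mem_empty_iff_false, iff_false]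
      rintro ⟨h1, h2⟩; exact hd m h1 h2
    rw [he] at h
    exact 𝒰.toFilter.empty_notMem h
  refine ⟨?_, ?_, ?_, ?_⟩
  · -- trichotomy
    by_cases hA : A ∈ 𝒰
    · exact Or.inl ⟨hA, hdisj_mem hAB hA, hdisj_mem hAC hA⟩
    by_cases hC : C ∈ 𝒰
    · exact Or.inr (Or.inr ⟨hC, hA, hdisj_mem (fun n hc hb => hBC n hb hc) hC⟩)
    · refine Or.inr (Or.inl ⟨?_, hA, hC⟩)
      have ha' : Aᶜ ∈ 𝒰 := (Ultrafilter.compl_mem_iff_notMem).2 hA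
      have hc' : Cᶜ ∈ 𝒰 := (Ultrafilter.compl_mem_iff_notMem).2 hC
      have := Filter.inter_mem ha' hc'
      refine Filter.mem_of_superset this ?_
      intro n hn
      rcases hcover n with h | h | h
      · exact absurd h hn.1
      · exact h
      · exact absurd h hn.2
  · -- constant subsequence
    intro hB
    obtain ⟨n₀, hn₀⟩ := (hinf B hB).nonempty
    have hS : {m : ℕ | u m = u n₀} ∈ 𝒰 := hn₀
    have hSinf : (setOf fun m => u m = u n₀).Infinite := hinf _ hS
    exact ⟨Nat.nth (fun m => u m = u n₀), Nat.nth_strictMono hSinf, u n₀,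
      fun k => Nat.nth_mem_of_infinite hSinf k⟩
  · -- strictly increasing subsequence
    intro hA
    have hstep' : ∀ n ∈ A, ∀ N : ℕ, ∃ m, m ∈ A ∧ N < m ∧ u n < u m := by
      intro n hn N
      have hT : A ∩ {m : ℕ | u n < u m} ∈ 𝒰 := Filter.inter_mem hA hn
      obtain ⟨m, hm, hNm⟩ := (hinf _ hT).exists_gt N
      exact ⟨m, hm.1, hNm, hm.2⟩
    obtain ⟨φ, hmono, hstep⟩ := build_seq u A (· < ·) (hinf A hA).nonempty hstep'
    exact ⟨φ, hmono, strictMono_nat_of_lt_succ hstep⟩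
  · -- strictly decreasing subsequence
    intro hC
    have hstep' : ∀ n ∈ C, ∀ N : ℕ, ∃ m, m ∈ C ∧ N < m ∧ u m < u n := by
      intro n hn N
      have hT : C ∩ {m : ℕ | u m < u n} ∈ 𝒰 := Filter.inter_mem hC hn
      obtain ⟨m, hm, hNm⟩ := (hinf _ hT).exists_gt N
      exact ⟨m, hm.1, hNm, hm.2⟩
    obtain ⟨φ, hmono, hstep⟩ := build_seq u C (fun x y => y < x) (hinf C hC).nonempty hstep'
    exact ⟨φ, hmono, strictAnti_nat_of_succ_lt hstep⟩
end

section
/- Let u : ℕ → ℝ be a sequence and 𝒰 a nonprincipal ultrafilter on ℕ. Let [u] denote the class of u in the ultrapower ℝ^ℕ/𝒰, suppose [u] is finite (bounded by a standard real), and let u₀ = st([u]) be its standard part. If [u] > u₀ (i.e., {n : u n > u₀} ∈ 𝒰 and [u] ≠ u₀), then u possesses a strictly decreasing subsequence. -/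
/-! Since `[u]` is finite, `L = st [u]` is its standard part, so `[u] < b` for every real `b > L`;
together with `L < [u]` this puts `{n | L < u n < b}` in the ultrafilter, so this set is infinite.
Starting from any `n` with `L < u n`, pick repeatedly a later index whose value lies in
`(L, u n)`. -/

open Hyperreal ArchimedeanClass Filter Set

theorem exists_strictAnti_subseq_of_forall_exists_lt {α : Type*} [Preorder α] {u : ℕ → α}
    {P : ℕ → Prop} (h₀ : ∃ n, P n) (h : ∀ n, P n → ∃ m, n < m ∧ P m ∧ u m < u n) :
    ∃ φ : ℕ → ℕ, StrictMono φ ∧ StrictAnti (u ∘ φ) := by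
  obtain ⟨n₀, hn₀⟩ := h₀
  choose! next hlt hP hdec using h
  have hP_iterate : ∀ k, P (next^[k] n₀) := by
    intro k
    induction k with
    | zero => exact hn₀
    | succ k ih => simpa only [Function.iterate_succ_apply'] using hP _ ih
  refine ⟨fun k => next^[k] n₀, strictMono_nat_of_lt_succ fun k => ?_,
    strictAnti_nat_of_succ_lt fun k => ?_⟩
  · simpa only [Function.iterate_succ_apply'] using hlt _ (hP_iterate k)
  · simpa only [Function.comp_apply, Function.iterate_succ_apply'] using hdec _ (hP_iterate k)

theorem exists_strictAnti_subseq_of_frequently_Ioo {α : Type*} [LinearOrder α] [NoMaxOrder α]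
    {u : ℕ → α} {L : α} (h : ∀ b, L < b → ∃ᶠ n in atTop, u n ∈ Ioo L b) :
    ∃ φ : ℕ → ℕ, StrictMono φ ∧ StrictAnti (u ∘ φ) := by
  refine exists_strictAnti_subseq_of_forall_exists_lt (P := fun n => L < u n) ?_ fun n hn => ?_
  · obtain ⟨b, hb⟩ := exists_gt L
    obtain ⟨n, hn, -⟩ := (h b hb).exists
    exact ⟨n, hn⟩
  · obtain ⟨m, hmn, hm⟩ := frequently_atTop.1 (h _ hn) (n + 1)
    exact ⟨m, hmn, hm⟩

theorem Hyperreal.archimedeanClassMk_nonneg_of_abs_lt {x : ℝ*} {r : ℝ} (h : |x| < r) :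
    0 ≤ mk x :=
  mk_nonneg_of_le_of_le_of_archimedean coeRingHom (r := -r) (s := r)
    (by simpa using (neg_lt_of_abs_lt h).le) (by simpa using (le_abs_self x).trans h.le)

theorem strictAnti_subsequence_of_gt_st (u : ℕ → ℝ)
    (hfin : ∃ r : ℝ, |ofSeq u| < (r : ℝ*))
    (hgt : ((st (ofSeq u) : ℝ) : ℝ*) < ofSeq u) :
    ∃ φ : ℕ → ℕ, StrictMono φ ∧ StrictAnti (u ∘ φ) := by
  obtain ⟨r, hr⟩ := hfin
  have hfinite := archimedeanClassMk_nonneg_of_abs_lt hr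
  rw [st_eq] at hgt
  refine exists_strictAnti_subseq_of_frequently_Ioo (L := stdPart (ofSeq u)) fun b hb => ?_
  have hlt : ofSeq u < b := lt_of_stdPart_lt coeRingHom hfinite hb
  exact ((ofSeq_lt_ofSeq.1 hgt).and (ofSeq_lt_ofSeq.1 hlt)).frequently.filter_mono
    Nat.hyperfilter_le_atTop
end

section
/- Countable saturation (finite intersection form): if (A n) is a sequence of subsets of ℝ with the finite intersection property (every finite subfamily has nonempty intersection), then the intersection of the nonstandard extensions *A n in the hyperreals is nonempty. -/
open Hyperreal Filter

def starSet (A : Set ℝ) : Set ℝ* :=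
  {x : ℝ* | ∃ u : ℕ → ℝ, x = ofSeq u ∧ {n : ℕ | u n ∈ A} ∈ hyperfilter ℕ}

theorem countable_saturation_fip (A : ℕ → Set ℝ)
    (hfip : ∀ s : Finset ℕ, (⋂ n ∈ s, A n).Nonempty) :
    (⋂ n, starSet (A n)).Nonempty := by
  choose u hu using fun k => hfip (Finset.range (k + 1))
  have hu' : ∀ n k, n ≤ k → u k ∈ A n := by
    intro n k hnk
    have := hu k
    simp only [Set.mem_iInter] at this
    exact this n (Finset.mem_range.mpr (Nat.lt_succ_of_le hnk))
  refine ⟨ofSeq u, Set.mem_iInter.mpr fun n => ⟨u, rfl, ?_⟩⟩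
  have : {k : ℕ | n ≤ k} ⊆ {k : ℕ | u k ∈ A n} := fun k hk => hu' n k hk
  exact mem_of_superset (mem_hyperfilter_of_finite_compl (by
    apply Set.Finite.subset (Set.finite_Iio n)
    intro k hk
    simpa using hk)) this
end
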